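/- (Quantum harmonic oscillator eigenstates.) Let ω > 0, n ∈ ℕ, and let H : ℝ → ℝ be a twice continuously differentiable function satisfying the Hermite differential equation H''(ξ) − 2ξH'(ξ) + 2nH(ξ) = 0 for all ξ ∈ ℝ. Define ψ : ℝ × ℝ → ℂ by ψ(x,t) := H(√ω·x)·exp(−½(ω x² + (2n+1)·i·ω·t)). Then ψ satisfies i∂_tψ(x,t) + ½∂_x²ψ(x,t) − ½ω²x²·ψ(x,t) = 0 for all (x,t) ∈ ℝ²; that is, ψ solves the one-dimensional Schrödinger equation with harmonic oscillator potential V(x) = ω²x²/2. -/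

import Mathlib

noncomputable section

/-- The quantum harmonic oscillator wave function
`ψ(x,t) = H(√ω·x)·exp(−½(ωx² + (2n+1)·i·ω·t))`, for a function `H` satisfying the
Hermite differential equation. -/
def hoWave (ω : ℝ) (n : ℕ) (H : ℝ → ℝ) (x t : ℝ) : ℂ :=
  ((H (Real.sqrt ω * x) : ℝ) : ℂ) *
    Complex.exp (-(1 / 2) *
      ((ω : ℂ) * (x : ℂ) ^ 2 + (2 * (n : ℂ) + 1) * Complex.I * (ω : ℂ) * (t : ℂ)))

/-!
Write `ψ(x,t) = φ(x)·e^{-iEt}` with `E = (n + ½)ω` and `φ(x) = h(√ω·x)`, where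
`h(ξ) = H(ξ)·e^{-ξ²/2}`. The Hermite equation for `H` is equivalent to
`h'' = (ξ² − (2n+1))·h`, so rescaling gives `−½φ'' + ½ω²x²·φ = E·φ`: `φ` is an eigenfunction
of the stationary Hamiltonian, and `φ(x)·e^{-iEt}` then solves the time-dependent equation.
-/

open Complex

theorem deriv_ofReal_comp (f : ℝ → ℝ) (x : ℝ) :
    deriv (fun y => (f y : ℂ)) x = deriv f x := by
  by_cases hf : DifferentiableAt ℝ f x
  · exact hf.hasDerivAt.ofReal_comp.deriv
  · have hfc : ¬DifferentiableAt ℝ (fun y => (f y : ℂ)) x := fun h => hf <| by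
      simpa [Function.comp_def] using
        (reCLM.hasFDerivAt.comp_hasDerivAt x h.hasDerivAt).differentiableAt
    rw [deriv_zero_of_not_differentiableAt hf, deriv_zero_of_not_differentiableAt hfc, ofReal_zero]

theorem deriv_deriv_comp_mul_left (f : ℝ → ℝ) (c x : ℝ) :
    deriv (deriv fun y => f (c * y)) x = c ^ 2 * deriv (deriv f) (c * x) := by
  have hfirst : (deriv fun y => f (c * y)) = fun y => c * deriv f (c * y) :=
    funext fun y => deriv_comp_mul_left (f := f) c y
  rw [hfirst, deriv_const_mul_field']
  dsimp only
  rw [deriv_comp_mul_left, smul_eq_mul]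
  ring

theorem hasDerivAt_mul_exp_neg_sq_half {g : ℝ → ℝ} {ξ : ℝ} (hg : DifferentiableAt ℝ g ξ) :
    HasDerivAt (fun ξ => g ξ * Real.exp (-ξ ^ 2 / 2))
      ((deriv g ξ - ξ * g ξ) * Real.exp (-ξ ^ 2 / 2)) ξ := by
  have hexponent : HasDerivAt (fun ξ : ℝ => -ξ ^ 2 / 2) (-ξ) ξ := by
    simpa [neg_div] using ((hasDerivAt_pow 2 ξ).div_const 2).fun_neg
  exact (hg.hasDerivAt.fun_mul hexponent.exp).congr_deriv (by ring)

theorem deriv_deriv_mul_exp_neg_sq_half_of_hermite {H : ℝ → ℝ} {ν : ℝ} (hH : ContDiff ℝ 2 H)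
    (hODE : ∀ ξ, deriv (deriv H) ξ - 2 * ξ * deriv H ξ + 2 * ν * H ξ = 0) (ξ : ℝ) :
    deriv (deriv fun ξ => H ξ * Real.exp (-ξ ^ 2 / 2)) ξ
      = (ξ ^ 2 - (2 * ν + 1)) * (H ξ * Real.exp (-ξ ^ 2 / 2)) := by
  have hH1 : Differentiable ℝ H := hH.differentiable two_ne_zero
  have hH2 : Differentiable ℝ (deriv H) := (hH.iterate_deriv' 1 1).differentiable one_ne_zero
  have hfirst : (deriv fun ξ => H ξ * Real.exp (-ξ ^ 2 / 2))
      = fun ξ => (deriv H ξ - ξ * H ξ) * Real.exp (-ξ ^ 2 / 2) :=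
    funext fun ξ => (hasDerivAt_mul_exp_neg_sq_half (hH1 ξ)).deriv
  have hinner : HasDerivAt (fun ξ => deriv H ξ - ξ * H ξ)
      (deriv (deriv H) ξ - (H ξ + ξ * deriv H ξ)) ξ := by
    simpa using (hH2 ξ).hasDerivAt.fun_sub ((hasDerivAt_id' ξ).fun_mul (hH1 ξ).hasDerivAt)
  rw [hfirst, (hasDerivAt_mul_exp_neg_sq_half hinner.differentiableAt).deriv, hinner.deriv]
  linear_combination Real.exp (-ξ ^ 2 / 2) * hODE ξ

theorem schrodinger_stationary_state (φ V : ℝ → ℝ) (E x : ℝ)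
    (hφ : -(1 / 2) * deriv (deriv φ) x + V x * φ x = E * φ x) (t : ℝ) :
    I * deriv (fun s : ℝ => (φ x : ℂ) * cexp (-I * E * s)) t
      + (1 / 2) * deriv (deriv fun y : ℝ => (φ y : ℂ) * cexp (-I * E * t)) x
      - (V x : ℂ) * ((φ x : ℂ) * cexp (-I * E * t)) = 0 := by
  have htime : HasDerivAt (fun s : ℝ => (φ x : ℂ) * cexp (-I * E * s))
      ((φ x : ℂ) * (cexp (-I * E * t) * (-I * E))) t :=
    ((hasDerivAt_id' t).ofReal_comp.const_mul (-I * E)).cexp.const_mul _ |>.congr_deriv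
      (by push_cast; ring)
  have hspace (a : ℂ) (f : ℝ → ℝ) :
      (deriv fun y : ℝ => (f y : ℂ) * a) = fun y => ((deriv f y : ℝ) : ℂ) * a := by
    simp only [deriv_mul_const_field', deriv_ofReal_comp]
  have hφℂ := congrArg ofReal hφ
  push_cast at hφℂ
  rw [htime.deriv, hspace, hspace]
  linear_combination (-cexp (-I * E * t)) * hφℂ - (E * φ x * cexp (-I * E * t)) * I_sq

/-- If `ω > 0` and `H ∈ C²(ℝ;ℝ)` satisfies the Hermite differential
equation `H''(ξ) − 2ξH'(ξ) + 2nH(ξ) = 0`, then `ψ = hoWave ω n H` solves the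
one-dimensional Schrödinger equation `i∂_tψ + ½∂_x²ψ − ½ω²x²·ψ = 0` on `ℝ²`. -/
theorem harmonic_oscillator_solution (ω : ℝ) (hω : 0 < ω) (n : ℕ)
    (H : ℝ → ℝ) (hH : ContDiff ℝ 2 H)
    (hODE : ∀ ξ : ℝ, deriv (deriv H) ξ - 2 * ξ * deriv H ξ + 2 * (n : ℝ) * H ξ = 0) :
    ∀ x t : ℝ,
      Complex.I * deriv (fun s => hoWave ω n H x s) t
        + (1 / 2) * deriv (deriv (fun y => hoWave ω n H y t)) x
        - ((ω ^ 2 * x ^ 2 / 2 : ℝ) : ℂ) * hoWave ω n H x t = 0 := by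
  intro x t
  set c := Real.sqrt ω
  have hc : c ^ 2 = ω := Real.sq_sqrt hω.le
  have hcℂ : (c : ℂ) ^ 2 = ω := by exact_mod_cast hc
  set φ : ℝ → ℝ := fun y => H (c * y) * Real.exp (-(c * y) ^ 2 / 2)
  have hwave : hoWave ω n H = fun y (s : ℝ) => (φ y : ℂ) * cexp (-I * ((n + 1 / 2) * ω : ℝ) * s) := by
    ext y s
    simp only [hoWave, φ, ofReal_mul, ofReal_exp, mul_assoc, ← Complex.exp_add]
    congr 2
    push_cast
    rw [mul_pow, hcℂ]
    ring
  have hφ : -(1 / 2) * deriv (deriv φ) x + (ω ^ 2 * x ^ 2 / 2) * φ x = ((n + 1 / 2) * ω) * φ x := by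
    rw [deriv_deriv_comp_mul_left (fun ξ => H ξ * Real.exp (-ξ ^ 2 / 2)),
      deriv_deriv_mul_exp_neg_sq_half_of_hermite hH hODE]
    simp only [φ, mul_pow, hc]
    ring
  rw [hwave]
  exact schrodinger_stationary_state φ (fun y => ω ^ 2 * y ^ 2 / 2) _ x hφ t

end
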